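/- arXiv:2305.03004 — 2 statements merged into one kernel-verified Lean document; each statement's English description precedes it below -/
import Mathlib

section
/- Composition of faulty measurements: let S_1,...,S_m and T_1,...,T_l be commuting families of commuting stabilizer generators. The composition of a faulty measurement of S with internal distribution P followed by a faulty measurement of T with internal distribution Q is a faulty measurement of (S,T) with internal distribution the twisted convolution (Q * P)(e,(u,v)) = Σ_f Q(f, v + Syn_T(f e)) P(f e, u), where Syn_T(g) ∈ F_2^l is the syndrome of g with respect to T (defined by g π^T_y g† = π^T_{y + Syn_T(g)}). -/
open Finset Matrix

lemma sum_reindex4 {M : Type*} [AddCommMonoid M]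
    {α β γ δ α' β' γ' δ' : Type*} [Fintype α] [Fintype β] [Fintype γ] [Fintype δ]
    [Fintype α'] [Fintype β'] [Fintype γ'] [Fintype δ']
    (F : α → β → γ → δ → M) (G : α' → β' → γ' → δ' → M)
    (e : α × β × γ × δ ≃ α' × β' × γ' × δ')
    (h : ∀ a b c d, F a b c d =
      G (e (a,b,c,d)).1 (e (a,b,c,d)).2.1 (e (a,b,c,d)).2.2.1 (e (a,b,c,d)).2.2.2) :
    (∑ a, ∑ b, ∑ c, ∑ d, F a b c d) = ∑ a', ∑ b', ∑ c', ∑ d', G a' b' c' d' := by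
  have h1 : (∑ a, ∑ b, ∑ c, ∑ d, F a b c d)
      = ∑ p : α × β × γ × δ, F p.1 p.2.1 p.2.2.1 p.2.2.2 := by
    simp only [Fintype.sum_prod_type]
  have h2 : (∑ a', ∑ b', ∑ c', ∑ d', G a' b' c' d')
      = ∑ p : α' × β' × γ' × δ', G p.1 p.2.1 p.2.2.1 p.2.2.2 := by
    simp only [Fintype.sum_prod_type]
  rw [h1, h2]
  exact Fintype.sum_equiv e _ _ (fun ⟨a,b,c,d⟩ => h a b c d)

/-- Composition of faulty measurements: a faulty measurement of commuting stabilizer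
generators `S` with internal distribution `P`, followed by a faulty measurement of a
commuting family `T` with internal distribution `Q`, is the faulty measurement of
`(S,T)` with internal distribution the twisted convolution
`(Q*P)(e,(u,v)) = Σ_f Q(f, v + Syn_T(f·e)) P(f·e, u)`. The statement is equality of the
(unnormalized) post-measurement states for every outcome `(x,y)` and every input `ρ`. -/
theorem composition_of_faulty_measurements
    {d ι : Type*} [Fintype d] [DecidableEq d] [Fintype ι] [CommGroup ι] {m l : ℕ}
    (E : ι → Matrix d d ℂ)   -- representatives of the effective Pauli group
    (horder : ∀ f : ι, f * f = 1)
    (hE : ∀ f e : ι, ∃ c : ℂ, ‖c‖ = 1 ∧ E (f * e) = c • (E f * E e))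
    (πS : (Fin m → ZMod 2) → Matrix d d ℂ)   -- syndrome projections of `S`
    (πT : (Fin l → ZMod 2) → Matrix d d ℂ)   -- syndrome projections of `T`
    (SynT : ι → Fin l → ZMod 2)
    (hsyn : ∀ (e : ι) (y : Fin l → ZMod 2), E e * πT y = πT (y + SynT e) * E e)
    (P : ι × (Fin m → ZMod 2) → ℝ) (Q : ι × (Fin l → ZMod 2) → ℝ)
    (hPnn : ∀ p, 0 ≤ P p) (hPsum : ∑ p, P p = 1)
    (hQnn : ∀ q, 0 ≤ Q q) (hQsum : ∑ q, Q q = 1)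
    (ρ : Matrix d d ℂ) (x : Fin m → ZMod 2) (y : Fin l → ZMod 2) :
    ∑ f : ι, ∑ v : Fin l → ZMod 2, ∑ e : ι, ∑ u : Fin m → ZMod 2,
      ((Q (f, v) * P (e, u) : ℝ) : ℂ) •
        (E f * πT (y + v) *
          (E e * πS (x + u) * ρ * (E e * πS (x + u))ᴴ) * (E f * πT (y + v))ᴴ)
    = ∑ g : ι, ∑ u : Fin m → ZMod 2, ∑ v : Fin l → ZMod 2,
      ((∑ f : ι, Q (f, v + SynT (f * g)) * P (f * g, u) : ℝ) : ℂ) •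
        (E g * (πT (y + v) * πS (x + u)) * ρ *
          (E g * (πT (y + v) * πS (x + u)))ᴴ) := by
  classical
  have addself : ∀ (v s : Fin l → ZMod 2), v + s + s = v := by
    intro v s; funext i
    simp [add_assoc, CharTwo.add_self_eq_zero]
  have hff : ∀ f e : ι, f * (f * e) = e := by
    intro f e; rw [← mul_assoc, horder, one_mul]
  have hsyn' : ∀ (e : ι) (w : Fin l → ZMod 2), πT w * E e = E e * πT (w + SynT e) := by
    intro e w
    have h := hsyn e (w + SynT e)
    rw [addself w (SynT e)] at h
    exact h.symm
  have key : ∀ (f e : ι) (v : Fin l → ZMod 2) (u : Fin m → ZMod 2),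
      E f * πT (y + v) * (E e * πS (x + u) * ρ * (E e * πS (x + u))ᴴ) * (E f * πT (y + v))ᴴ
      = E (f * e) * (πT (y + v + SynT e) * πS (x + u)) * ρ *
          (E (f * e) * (πT (y + v + SynT e) * πS (x + u)))ᴴ := by
    intro f e v u
    obtain ⟨c, hc, hEfe⟩ := hE f e
    have hc0 : c ≠ 0 := by intro h; simp [h] at hc
    set B := E (f * e) * (πT (y + v + SynT e) * πS (x + u)) with hB
    have hA : E f * πT (y + v) * (E e * πS (x + u)) = c⁻¹ • B := by
      have h1 : E f * πT (y + v) * (E e * πS (x + u))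
          = (E f * E e) * (πT (y + v + SynT e) * πS (x + u)) := by
        rw [← mul_assoc, mul_assoc (E f), hsyn' e (y + v), ← mul_assoc, mul_assoc]
      rw [h1, hB, hEfe, smul_mul_assoc, smul_smul, inv_mul_cancel₀ hc0, one_smul]
    have h2 : E f * πT (y + v) * (E e * πS (x + u) * ρ * (E e * πS (x + u))ᴴ)
          * (E f * πT (y + v))ᴴ
        = (E f * πT (y + v) * (E e * πS (x + u))) * ρ *
          (E f * πT (y + v) * (E e * πS (x + u)))ᴴ := by
      simp only [conjTranspose_mul, Matrix.mul_assoc]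
    have hcc : c⁻¹ * star c⁻¹ = 1 := by
      have h1 : c * star c = 1 := by
        rw [Complex.star_def, Complex.mul_conj']
        norm_num [hc]
      rw [star_inv₀, ← mul_inv, h1, inv_one]
    rw [h2, hA, conjTranspose_smul, smul_mul_assoc, smul_mul_assoc, mul_smul_comm,
      smul_smul, hcc, one_smul]
  simp only [key, Complex.ofReal_sum, Finset.sum_smul]
  refine sum_reindex4 _ _
    ⟨fun p => (p.1 * p.2.2.1, p.2.2.2, p.2.1 + SynT p.2.2.1, p.1),
     fun q => (q.2.2.2, q.2.2.1 + SynT (q.2.2.2 * q.1), q.2.2.2 * q.1, q.2.1),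
     ?_, ?_⟩ ?_
  · rintro ⟨f, v, e, u⟩
    simp [hff, addself]
  · rintro ⟨g, u, v, f⟩
    simp [hff, addself]
  · intro f v e u
    simp only [Equiv.coe_fn_mk, hff, addself, add_assoc]
end

section
/- For a faulty measurement with internal distribution P on P̄_n × F_2^m and any a ∈ F_2^m, the expected value of S(a) computed from the faulty outcome distribution satisfies Ẽ(a|ρ) = E(χ_a; P) · E(a|ρ), where E(χ_a; P) = Σ_{e,u} (-1)^{a·u} P(e,u), Ẽ(a|ρ) = Σ_x (-1)^{a·x} p̃(x|ρ), and E(a|ρ) = tr(S(a)ρ). -/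
/-!
Character sums over `F₂ᵐ` invert the syndrome decomposition: expanding the ordered product
`π_x = Π_i (1 + (-1)^{x_i} S_i)/2`, one coordinate at a time, gives
`Σ_x (-1)^{a·x} π_x = Π_i S_i^{a_i} = S(a)`.
A fault `u` only shifts the syndrome, `x ↦ x + u`, which multiplies the character `(-1)^{a·x}`
by `(-1)^{a·u}`; averaging over `P` produces the factor `E(χ_a; P)`.
-/

open Finset Matrix

def dotp {m : ℕ} (a x : Fin m → ZMod 2) : ZMod 2 := ∑ i, a i * x i

/-- Syndrome projection `π_x = Π_i (Id + (-1)^{x_i} S_i)/2`. -/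
noncomputable def proj {d : Type*} [Fintype d] [DecidableEq d] {m : ℕ}
    (S : Fin m → Matrix d d ℂ) (x : Fin m → ZMod 2) : Matrix d d ℂ :=
  (List.ofFn fun i => (2 : ℂ)⁻¹ • ((1 : Matrix d d ℂ) + ((-1 : ℂ) ^ (x i).val) • S i)).prod

/-- Stabilizer element `S(a) = Π_i S_i^{a_i}`. -/
noncomputable def Spow {d : Type*} [Fintype d] [DecidableEq d] {m : ℕ}
    (S : Fin m → Matrix d d ℂ) (a : Fin m → ZMod 2) : Matrix d d ℂ :=
  (List.ofFn fun i => S i ^ (a i).val).prod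

theorem neg_one_pow_val_add {R : Type*} [Ring R] (u v : ZMod 2) :
    (-1 : R) ^ (u + v).val = (-1) ^ u.val * (-1) ^ v.val := by
  rw [ZMod.val_add, ← neg_one_pow_eq_pow_mod_two, pow_add]

theorem dotp_add {m : ℕ} (a x u : Fin m → ZMod 2) :
    dotp a (x + u) = dotp a x + dotp a u :=
  dotProduct_add a x u

theorem dotp_cons {m : ℕ} (a : Fin (m + 1) → ZMod 2) (x₀ : ZMod 2) (xs : Fin m → ZMod 2) :
    dotp a (Fin.cons x₀ xs) = a 0 * x₀ + dotp (Fin.tail a) xs := by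
  simp [dotp, Fin.sum_univ_succ, Fin.tail]

noncomputable def syndromeFactor {R : Type*} [Ring R] [Module ℂ R] (A : R) (b : ZMod 2) : R :=
  (2 : ℂ)⁻¹ • (1 + ((-1 : ℂ) ^ b.val) • A)

theorem sum_neg_one_pow_smul_syndromeFactor {R : Type*} [Ring R] [Module ℂ R] (A : R)
    (b : ZMod 2) :
    ∑ x : ZMod 2, ((-1 : ℂ) ^ (b * x).val) • syndromeFactor A x = A ^ b.val := by
  have huniv : (univ : Finset (ZMod 2)) = {0, 1} := by decide
  rw [huniv, sum_pair (by decide)]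
  obtain rfl | rfl : b = 0 ∨ b = 1 := by decide +revert
  all_goals
    simp only [syndromeFactor, mul_zero, mul_one, ZMod.val_zero, ZMod.val_one, pow_zero, pow_one]
    module

theorem proj_cons {d : Type*} [Fintype d] [DecidableEq d] {m : ℕ}
    (S : Fin (m + 1) → Matrix d d ℂ) (x₀ : ZMod 2) (xs : Fin m → ZMod 2) :
    proj S (Fin.cons x₀ xs) = syndromeFactor (S 0) x₀ * proj (Fin.tail S) xs := by
  rw [proj, List.ofFn_succ, List.prod_cons]
  rfl

theorem Spow_succ {d : Type*} [Fintype d] [DecidableEq d] {m : ℕ}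
    (S : Fin (m + 1) → Matrix d d ℂ) (a : Fin (m + 1) → ZMod 2) :
    Spow S a = S 0 ^ (a 0).val * Spow (Fin.tail S) (Fin.tail a) := by
  rw [Spow, List.ofFn_succ, List.prod_cons]
  rfl

theorem sum_neg_one_pow_smul_proj {d : Type*} [Fintype d] [DecidableEq d] :
    ∀ {m : ℕ} (S : Fin m → Matrix d d ℂ) (a : Fin m → ZMod 2),
      ∑ x, ((-1 : ℂ) ^ (dotp a x).val) • proj S x = Spow S a
  | 0, S, a => by simp [proj, Spow, dotp]
  | m + 1, S, a => by
    rw [← (Fin.consEquiv fun _ => ZMod 2).sum_comp, Fintype.sum_prod_type]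
    calc ∑ x₀, ∑ xs, ((-1 : ℂ) ^ (dotp a (Fin.cons x₀ xs)).val) • proj S (Fin.cons x₀ xs)
        = (∑ x₀, ((-1 : ℂ) ^ (a 0 * x₀).val) • syndromeFactor (S 0) x₀) *
            ∑ xs, ((-1 : ℂ) ^ (dotp (Fin.tail a) xs).val) • proj (Fin.tail S) xs := by
          rw [sum_mul_sum]
          refine sum_congr rfl fun x₀ _ => sum_congr rfl fun xs _ => ?_
          rw [dotp_cons, proj_cons, neg_one_pow_val_add, smul_mul_smul_comm]
      _ = Spow S a := by
          rw [sum_neg_one_pow_smul_syndromeFactor, sum_neg_one_pow_smul_proj, Spow_succ]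

theorem sum_neg_one_pow_mul_trace_proj {d : Type*} [Fintype d] [DecidableEq d] {m : ℕ}
    (S : Fin m → Matrix d d ℂ) (ρ : Matrix d d ℂ) (a : Fin m → ZMod 2) :
    ∑ x, ((-1 : ℂ) ^ (dotp a x).val) * (proj S x * ρ).trace = (Spow S a * ρ).trace := by
  simp_rw [← sum_neg_one_pow_smul_proj S a, sum_mul, trace_sum, smul_mul_assoc, trace_smul,
    smul_eq_mul]

theorem sum_neg_one_pow_mul_trace_proj_add {d : Type*} [Fintype d] [DecidableEq d] {m : ℕ}
    (S : Fin m → Matrix d d ℂ) (ρ : Matrix d d ℂ) (a u : Fin m → ZMod 2) :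
    ∑ x, ((-1 : ℂ) ^ (dotp a x).val) * (proj S (x + u) * ρ).trace
      = (-1) ^ (dotp a u).val * (Spow S a * ρ).trace := by
  -- In characteristic two the shift `x ↦ x + u` is an involution.
  calc ∑ x, ((-1 : ℂ) ^ (dotp a x).val) * (proj S (x + u) * ρ).trace
      = ∑ y, ((-1 : ℂ) ^ (dotp a (y + u)).val) * (proj S y * ρ).trace :=
        Fintype.sum_equiv (Equiv.addRight u) _ _ fun x => by
          rw [Equiv.coe_addRight, add_assoc, ZModModule.add_self, add_zero]
    _ = (-1) ^ (dotp a u).val * ∑ y, ((-1 : ℂ) ^ (dotp a y).val) * (proj S y * ρ).trace := by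
        rw [mul_sum]
        refine sum_congr rfl fun y _ => ?_
        rw [dotp_add, neg_one_pow_val_add]
        ring
    _ = (-1) ^ (dotp a u).val * (Spow S a * ρ).trace := by
        rw [sum_neg_one_pow_mul_trace_proj]

theorem noisy_expectation_factorizes_general {d ι : Type*} [Fintype d] [DecidableEq d]
    [Fintype ι] {m : ℕ}
    (S : Fin m → Matrix d d ℂ)
    (P : ι × (Fin m → ZMod 2) → ℝ)
    (ρ : Matrix d d ℂ) (a : Fin m → ZMod 2) :
    ∑ x : Fin m → ZMod 2, ((-1 : ℂ) ^ (dotp a x).val) *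
        (∑ p : ι × (Fin m → ZMod 2), (P p : ℂ) * (proj S (x + p.2) * ρ).trace)
      = (∑ p : ι × (Fin m → ZMod 2), ((-1 : ℂ) ^ (dotp a p.2).val) * (P p : ℂ)) *
          (Spow S a * ρ).trace := by
  simp_rw [mul_sum]
  rw [sum_comm, sum_mul]
  refine sum_congr rfl fun p _ => ?_
  simp_rw [mul_left_comm _ (P p : ℂ), ← mul_sum, sum_neg_one_pow_mul_trace_proj_add]
  ring

/-- For a faulty measurement with internal distribution `P` and outcome probabilities
`p̃(x|ρ) = Σ_{e,u} P(e,u) tr(π_{x+u} ρ)`, the noisy expectation value of `S(a)` satisfies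
`Ẽ(a|ρ) = E(χ_a; P) · E(a|ρ)`. -/
theorem noisy_expectation_factorizes {d ι : Type*} [Fintype d] [DecidableEq d]
    [Fintype ι] {m : ℕ}
    (S : Fin m → Matrix d d ℂ)
    (hcomm : ∀ i j, S i * S j = S j * S i)
    (hinv : ∀ i, S i * S i = 1)
    (P : ι × (Fin m → ZMod 2) → ℝ) (hPnn : ∀ p, 0 ≤ P p) (hPsum : ∑ p, P p = 1)
    (ρ : Matrix d d ℂ) (a : Fin m → ZMod 2) :
    ∑ x : Fin m → ZMod 2, ((-1 : ℂ) ^ (dotp a x).val) *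
        (∑ p : ι × (Fin m → ZMod 2), (P p : ℂ) * (proj S (x + p.2) * ρ).trace)
      = (∑ p : ι × (Fin m → ZMod 2), ((-1 : ℂ) ^ (dotp a p.2).val) * (P p : ℂ)) *
          (Spow S a * ρ).trace :=
  noisy_expectation_factorizes_general S P ρ a
end
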